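/- arXiv:1011.0974 — 6 statements merged into one kernel-verified Lean document; each statement's English description precedes it below -/
import Mathlib

section
/- For every smooth compactly supported map v : ℝ² → ℝ² one has ∫_{ℝ²} ‖Dv‖_F² dx ≤ 2 ∫_{ℝ²} ‖ε(v)‖_F² dx. -/
open MeasureTheory Matrix

/-- Jacobian matrix of a map `v : ℝ² → ℝ²` at a point: `(jac v p) i j = ∂ⱼ vᵢ (p)`. -/
noncomputable def jac (v : (Fin 2 → ℝ) → (Fin 2 → ℝ)) (p : Fin 2 → ℝ) :
    Matrix (Fin 2) (Fin 2) ℝ :=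
  fun i j => fderiv ℝ v p (Pi.single j 1) i

/-- Symmetric gradient `ε(v) = (Dv + (Dv)ᵀ)/2`. -/
noncomputable def epsl (v : (Fin 2 → ℝ) → (Fin 2 → ℝ)) (p : Fin 2 → ℝ) :
    Matrix (Fin 2) (Fin 2) ℝ :=
  (1 / 2 : ℝ) • (jac v p + (jac v p)ᵀ)

/-- Squared Frobenius norm of a 2×2 matrix. -/
def frobSq (A : Matrix (Fin 2) (Fin 2) ℝ) : ℝ := ∑ i, ∑ j, (A i j) ^ 2

/-- Frobenius inner product of 2×2 matrices. -/
def frobInner (A B : Matrix (Fin 2) (Fin 2) ℝ) : ℝ := ∑ i, ∑ j, A i j * B i j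

/-- Divergence `div v = tr (Dv)`. -/
noncomputable def divg (v : (Fin 2 → ℝ) → (Fin 2 → ℝ)) (p : Fin 2 → ℝ) : ℝ :=
  Matrix.trace (jac v p)

/-- Scalar rotation `rot v = ∂₁v₂ − ∂₂v₁`. -/
noncomputable def rotv (v : (Fin 2 → ℝ) → (Fin 2 → ℝ)) (p : Fin 2 → ℝ) : ℝ :=
  jac v p 1 0 - jac v p 0 1

noncomputable def pd (j : Fin 2) (f : (Fin 2 → ℝ) → ℝ) (p : Fin 2 → ℝ) : ℝ :=
  fderiv ℝ f p (Pi.single j 1)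

lemma pd_contDiff {f : (Fin 2 → ℝ) → ℝ} (hf : ContDiff ℝ (⊤ : ℕ∞) f) (j : Fin 2) :
    ContDiff ℝ (⊤ : ℕ∞) (pd j f) :=
  (hf.fderiv_right (by simp)).clm_apply contDiff_const

lemma pd_supp {f : (Fin 2 → ℝ) → ℝ} (hf : HasCompactSupport f) (j : Fin 2) :
    HasCompactSupport (pd j f) :=
  hf.fderiv_apply ℝ (Pi.single j 1)

lemma pd_comm {f : (Fin 2 → ℝ) → ℝ} (hf : ContDiff ℝ (⊤ : ℕ∞) f) (p : Fin 2 → ℝ) (i j : Fin 2) :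
    pd i (pd j f) p = pd j (pd i f) p := by
  have hdf : Differentiable ℝ (fderiv ℝ f) := (hf.fderiv_right (m := 1) (WithTop.coe_le_coe.mpr le_top)).differentiable one_ne_zero
  have h : ∀ k : Fin 2, fderiv ℝ (pd k f) p =
      (fderiv ℝ (fderiv ℝ f) p).flip (Pi.single k 1) := by
    intro k
    have := fderiv_clm_apply (hdf p) (differentiableAt_const (Pi.single k (1:ℝ)))
    simp at this
    exact this
  have hsymm := (hf.contDiffAt (x := p)).isSymmSndFDerivAt (by rw [minSmoothness_of_isRCLikeNormedField]; exact WithTop.coe_le_coe.mpr le_top)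
  simp only [pd, h]
  exact hsymm.eq _ _

lemma int_mul {f g : (Fin 2 → ℝ) → ℝ} (hf : ContDiff ℝ (⊤ : ℕ∞) f) (hg : ContDiff ℝ (⊤ : ℕ∞) g)
    (hfs : HasCompactSupport f) :
    Integrable (fun p => f p * g p) := by
  apply Continuous.integrable_of_hasCompactSupport (hf.continuous.mul hg.continuous)
  exact hfs.mul_right

lemma ibp {f g : (Fin 2 → ℝ) → ℝ} (hf : ContDiff ℝ (⊤ : ℕ∞) f) (hg : ContDiff ℝ (⊤ : ℕ∞) g)
    (hfs : HasCompactSupport f) (hgs : HasCompactSupport g) (j : Fin 2) :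
    ∫ p, f p * pd j g p = - ∫ p, pd j f p * g p :=
  integral_mul_fderiv_eq_neg_fderiv_mul_of_integrable
    (int_mul (pd_contDiff hf j) hg (pd_supp hfs j))
    (int_mul hf (pd_contDiff hg j) hfs)
    (int_mul hf hg hfs)
    (fun x _ => hf.differentiable (by simp) x) (fun x _ => hg.differentiable (by simp) x)

lemma jac_pd {v : (Fin 2 → ℝ) → (Fin 2 → ℝ)} (hv : ContDiff ℝ (⊤ : ℕ∞) v) (p : Fin 2 → ℝ)
    (i j : Fin 2) : jac v p i j = pd j (fun q => v q i) p := by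
  have hD := (hv.differentiable (by simp) p).hasFDerivAt
  have h := ((ContinuousLinearMap.proj (R := ℝ) (φ := fun _ : Fin 2 => ℝ) i).hasFDerivAt).comp p hD
  have h' : fderiv ℝ (fun q => v q i) p =
      (ContinuousLinearMap.proj (R := ℝ) (φ := fun _ : Fin 2 => ℝ) i).comp (fderiv ℝ v p) :=
    h.fderiv
  simp [jac, pd, h']

/-- Korn's inequality of Annex A.1: `∫ ‖Dv‖_F² ≤ 2 ∫ ‖ε(v)‖_F²`
for smooth compactly supported `v : ℝ² → ℝ²`. -/
theorem stmt1 (v : (Fin 2 → ℝ) → (Fin 2 → ℝ))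
    (hv : ContDiff ℝ (⊤ : ℕ∞) v) (hsupp : HasCompactSupport v) :
    (∫ p, frobSq (jac v p)) ≤ 2 * ∫ p, frobSq (epsl v p) := by
  have hg : ∀ i : Fin 2, ContDiff ℝ (⊤ : ℕ∞) (fun q => v q i) := fun i =>
    (ContinuousLinearMap.proj (R := ℝ) (φ := fun _ : Fin 2 => ℝ) i).contDiff.comp hv
  have hs : ∀ i : Fin 2, HasCompactSupport (fun q => v q i) := fun i =>
    hsupp.comp_left (g := fun y : Fin 2 → ℝ => y i) rfl
  set a : (Fin 2 → ℝ) → ℝ := pd 0 (fun q => v q 0) with ha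
  set b : (Fin 2 → ℝ) → ℝ := pd 1 (fun q => v q 0) with hb
  set c : (Fin 2 → ℝ) → ℝ := pd 0 (fun q => v q 1) with hc
  set d : (Fin 2 → ℝ) → ℝ := pd 1 (fun q => v q 1) with hd
  have hca : ∀ (j : Fin 2) (i : Fin 2), ContDiff ℝ (⊤ : ℕ∞) (pd j (fun q => v q i)) :=
    fun j i => pd_contDiff (hg i) j
  have hsa : ∀ (j : Fin 2) (i : Fin 2), HasCompactSupport (pd j (fun q => v q i)) :=
    fun j i => pd_supp (hs i) j
  -- key integration-by-parts identity : ∫ b c = ∫ a d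
  have key : (∫ p, b p * c p) = ∫ p, a p * d p := by
    have h1 := ibp (hca 1 0) (hg 1) (hsa 1 0) (hs 1) 0
    have h2 := ibp (hca 0 0) (hg 1) (hsa 0 0) (hs 1) 1
    have hmix : (fun p => pd 0 (pd 1 fun q => v q 0) p * v p 1)
        = fun p => pd 1 (pd 0 fun q => v q 0) p * v p 1 :=
      funext fun p => by rw [pd_comm (hg 0) p 0 1]
    rw [ha, hb, hc, hd]
    calc (∫ p, pd 1 (fun q => v q 0) p * pd 0 (fun q => v q 1) p)
        = - ∫ p, pd 0 (pd 1 fun q => v q 0) p * v p 1 := h1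
      _ = - ∫ p, pd 1 (pd 0 fun q => v q 0) p * v p 1 := by rw [hmix]
      _ = ∫ p, pd 0 (fun q => v q 0) p * pd 1 (fun q => v q 1) p := h2.symm
  -- pointwise expansions
  have hjac : ∀ p, frobSq (jac v p) = a p * a p + (b p * b p + (c p * c p + d p * d p)) := by
    intro p
    simp only [frobSq, Fin.sum_univ_two, jac_pd hv p, ha, hb, hc, hd]
    ring
  have heps : ∀ p, 2 * frobSq (epsl v p) = frobSq (jac v p) +
      ((a p + d p) * (a p + d p) + (2 * (b p * c p) - 2 * (a p * d p))) := by
    intro p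
    simp only [frobSq, epsl, Matrix.smul_apply, Matrix.add_apply, Matrix.transpose_apply,
      Fin.sum_univ_two, jac_pd hv p, ha, hb, hc, hd, smul_eq_mul]
    ring
  -- integrability
  have Iaa := int_mul (hca 0 0) (hca 0 0) (hsa 0 0)
  have Ibb := int_mul (hca 1 0) (hca 1 0) (hsa 1 0)
  have Icc := int_mul (hca 0 1) (hca 0 1) (hsa 0 1)
  have Idd := int_mul (hca 1 1) (hca 1 1) (hsa 1 1)
  have Iad := int_mul (hca 0 0) (hca 1 1) (hsa 0 0)
  have Ibc := int_mul (hca 1 0) (hca 0 1) (hsa 1 0)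
  have Isq : Integrable (fun p => (a p + d p) * (a p + d p)) := by
    have h1 : ContDiff ℝ (⊤ : ℕ∞) (fun p => a p + d p) := (hca 0 0).add (hca 1 1)
    have h2 : HasCompactSupport (fun p => a p + d p) := (hsa 0 0).add (hsa 1 1)
    exact int_mul h1 h1 h2
  have hIntJ : Integrable (fun p => frobSq (jac v p)) := by
    rw [funext hjac]
    exact Iaa.add (Ibb.add (Icc.add Idd))
  have Isub' : Integrable (fun p => 2 * (b p * c p) - 2 * (a p * d p)) :=
    (Ibc.const_mul 2).sub (Iad.const_mul 2)
  have hIntR : Integrable (fun p =>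
      (a p + d p) * (a p + d p) + (2 * (b p * c p) - 2 * (a p * d p))) :=
    Isq.add Isub'
  -- assemble
  have Isub : Integrable (fun p => 2 * (b p * c p) - 2 * (a p * d p)) :=
    (Ibc.const_mul 2).sub (Iad.const_mul 2)
  have hR : (∫ p, (a p + d p) * (a p + d p) + (2 * (b p * c p) - 2 * (a p * d p)))
      = ∫ p, (a p + d p) * (a p + d p) := by
    have hz : (∫ p, 2 * (b p * c p) - 2 * (a p * d p)) = 0 := by
      rw [integral_sub (Ibc.const_mul 2) (Iad.const_mul 2), integral_const_mul,
        integral_const_mul, key]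
      ring
    rw [integral_add Isq Isub, hz, add_zero]
  have hnn : (0:ℝ) ≤ ∫ p, (a p + d p) * (a p + d p) :=
    integral_nonneg fun p => mul_self_nonneg _
  have hfinal : 2 * (∫ p, frobSq (epsl v p)) = (∫ p, frobSq (jac v p)) +
      ∫ p, (a p + d p) * (a p + d p) := by
    rw [← integral_const_mul, funext heps, integral_add hIntJ hIntR, hR]
  linarith
end

section
/- For every smooth compactly supported map u : ℝ² → ℝ² one has the identity ∫_{ℝ²} (rot u)² dx + 2 ∫_{ℝ²} (div u)² dx = 2 ∫_{ℝ²} ‖ε(u)‖_F² dx. -/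
open MeasureTheory Matrix

namespace Stmt5Aux

lemma update_comp (c : Fin 2 → ℝ) (j : Fin 2) :
    (fun t : ℝ => Function.update c j t)
      = fun t => t • Pi.single j (1:ℝ) + Function.update c j 0 := by
  funext t i
  by_cases h : i = j
  · subst h; simp
  · simp [Function.update_of_ne h, Pi.single_eq_of_ne h]

lemma hasDerivAt_update (c : Fin 2 → ℝ) (j : Fin 2) (t : ℝ) :
    HasDerivAt (fun t : ℝ => Function.update c j t) (Pi.single j (1:ℝ)) t := by
  rw [update_comp]
  have h := ((hasDerivAt_id t).smul_const (Pi.single j (1:ℝ))).add_const (Function.update c j 0)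
  simpa using h

lemma hcs_update {E : Type*} [NormedAddCommGroup E] (F : (Fin 2 → ℝ) → E)
    (hF : HasCompactSupport F) (j : Fin 2) (c : Fin 2 → ℝ) :
    HasCompactSupport (fun t : ℝ => F (Function.update c j t)) := by
  obtain ⟨R, hR⟩ := hF.isBounded.subset_closedBall 0
  apply HasCompactSupport.intro (isCompact_closedBall (0:ℝ) R)
  intro t ht
  apply image_eq_zero_of_notMem_tsupport
  intro hmem
  apply ht
  have h1 := hR hmem
  rw [Metric.mem_closedBall, dist_zero_right] at h1 ⊢
  calc ‖t‖ = ‖Function.update c j t j‖ := by simp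
    _ ≤ ‖Function.update c j t‖ := norm_le_pi_norm _ j
    _ ≤ R := h1

lemma line (g : (Fin 2 → ℝ) → ℝ) (hg : ContDiff ℝ (⊤ : ℕ∞) g)
    (hs : HasCompactSupport g) (j : Fin 2) (c : Fin 2 → ℝ) :
    ∫ t : ℝ, fderiv ℝ g (Function.update c j t) (Pi.single j 1) = 0 := by
  have hder : ∀ t : ℝ, HasDerivAt (fun t : ℝ => g (Function.update c j t))
      (fderiv ℝ g (Function.update c j t) (Pi.single j 1)) t := fun t =>
    ((hg.differentiable (by simp) _).hasFDerivAt.comp_hasDerivAt t (hasDerivAt_update c j t))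
  have hcont_upd : Continuous (fun t : ℝ => Function.update c j t) := by
    rw [update_comp]
    exact (continuous_id.smul continuous_const).add continuous_const
  apply integral_eq_zero_of_hasDerivAt_of_integrable hder
  · have hcont : Continuous fun t : ℝ => fderiv ℝ g (Function.update c j t) (Pi.single j 1) :=
      (((hg.continuous_fderiv (by simp)).comp hcont_upd).clm_apply continuous_const)
    have hcs : HasCompactSupport
        (fun t : ℝ => fderiv ℝ g (Function.update c j t) (Pi.single j 1)) := by
      have h1 : HasCompactSupport (fun p => fderiv ℝ g p (Pi.single j 1)) :=
        (HasCompactSupport.fderiv ℝ hs).comp_left (g := fun L : (Fin 2 → ℝ) →L[ℝ] ℝ => L (Pi.single j 1)) rfl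
      exact hcs_update _ h1 j c
    exact hcont.integrable_of_hasCompactSupport hcs
  · exact (hg.continuous.comp hcont_upd).integrable_of_hasCompactSupport
      (hcs_update g hs j c)

lemma cons0 (x y : ℝ) :
    (Fin.cons x (Fin.cons y finZeroElim) : Fin 2 → ℝ) = Function.update ![(0:ℝ), y] 0 x := by
  funext i
  fin_cases i <;> simp

lemma cons1 (x y : ℝ) :
    (Fin.cons x (Fin.cons y finZeroElim) : Fin 2 → ℝ) = Function.update ![x, (0:ℝ)] 1 y := by
  funext i
  fin_cases i <;> simp

lemma key (g : (Fin 2 → ℝ) → ℝ) (hg : ContDiff ℝ (⊤ : ℕ∞) g)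
    (hs : HasCompactSupport g) (j : Fin 2) :
    ∫ p, fderiv ℝ g p (Pi.single j 1) = 0 := by
  have hFc : Continuous fun p => fderiv ℝ g p (Pi.single j 1) :=
    (hg.continuous_fderiv (by simp)).clm_apply continuous_const
  have hFs : HasCompactSupport fun p => fderiv ℝ g p (Pi.single j 1) :=
    (HasCompactSupport.fderiv ℝ hs).comp_left (g := fun L : (Fin 2 → ℝ) →L[ℝ] ℝ => L (Pi.single j 1)) rfl
  have hFi : Integrable fun p => fderiv ℝ g p (Pi.single j 1) :=
    hFc.integrable_of_hasCompactSupport hFs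
  have hmp := (volume_preserving_finTwoArrow ℝ).symm
  have hemb := (MeasurableEquiv.finTwoArrow (α := ℝ)).symm.measurableEmbedding
  rw [← hmp.integral_comp hemb]
  have hint : Integrable
      (fun z : ℝ × ℝ => fderiv ℝ g (MeasurableEquiv.finTwoArrow.symm z) (Pi.single j 1)) :=
    (hmp.integrable_comp_emb hemb).2 hFi
  rw [MeasureTheory.Measure.volume_eq_prod] at hint ⊢
  fin_cases j
  · rw [integral_prod_symm _ hint]
    simp only [MeasurableEquiv.finTwoArrow_symm_apply]
    have h0 : ∀ y : ℝ, ∫ x : ℝ,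
        fderiv ℝ g (Fin.cons x (Fin.cons y finZeroElim) : Fin 2 → ℝ) (Pi.single (0 : Fin 2) 1) = 0 := by
      intro y
      simp only [cons0]
      exact line g hg hs 0 ![0, y]
    refine integral_eq_zero_of_ae (Filter.Eventually.of_forall fun y => ?_)
    rw [Pi.zero_apply]; convert h0 y using 4
    ext i; fin_cases i <;> rfl
  · rw [integral_prod _ hint]
    simp only [MeasurableEquiv.finTwoArrow_symm_apply]
    have h1 : ∀ x : ℝ, ∫ y : ℝ,
        fderiv ℝ g (Fin.cons x (Fin.cons y finZeroElim) : Fin 2 → ℝ) (Pi.single (1 : Fin 2) 1) = 0 := by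
      intro x
      simp only [cons1]
      exact line g hg hs 1 ![x, 0]
    refine integral_eq_zero_of_ae (Filter.Eventually.of_forall fun y => ?_)
    rw [Pi.zero_apply]; convert h1 y using 4
    ext i; fin_cases i <;> rfl

lemma fderiv_fderiv_apply (g : (Fin 2 → ℝ) → ℝ) (hg : ContDiff ℝ (⊤ : ℕ∞) g)
    (p v w : Fin 2 → ℝ) :
    fderiv ℝ (fun q => fderiv ℝ g q v) p w = fderiv ℝ (fderiv ℝ g) p w v := by
  have h1 : DifferentiableAt ℝ (fderiv ℝ g) p :=
    ((hg.fderiv_right (m := 1) (WithTop.coe_le_coe.mpr le_top)).differentiable (by simp)) p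
  rw [fderiv_clm_apply h1 (differentiableAt_const v)]
  simp

lemma mixed (g : (Fin 2 → ℝ) → ℝ) (hg : ContDiff ℝ (⊤ : ℕ∞) g) (p v w : Fin 2 → ℝ) :
    fderiv ℝ (fun q => fderiv ℝ g q v) p w = fderiv ℝ (fun q => fderiv ℝ g q w) p v := by
  rw [fderiv_fderiv_apply g hg, fderiv_fderiv_apply g hg]
  exact (hg.contDiffAt.isSymmSndFDerivAt (by simp [minSmoothness_of_isRCLikeNormedField]; exact WithTop.coe_le_coe.mpr (le_top : (2:ℕ∞) ≤ ⊤))).eq w v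

lemma ibp (f g : (Fin 2 → ℝ) → ℝ) (hf : ContDiff ℝ (⊤ : ℕ∞) f) (hg : ContDiff ℝ (⊤ : ℕ∞) g)
    (hsf : HasCompactSupport f) (j : Fin 2) :
    ∫ p, fderiv ℝ f p (Pi.single j 1) * g p
      = - ∫ p, f p * fderiv ℝ g p (Pi.single j 1) := by
  have hdc : ∀ h : (Fin 2 → ℝ) → ℝ, ContDiff ℝ (⊤ : ℕ∞) h →
      Continuous fun p => fderiv ℝ h p (Pi.single j 1) :=
    fun h hh => (hh.continuous_fderiv (by simp)).clm_apply continuous_const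
  have h0 := key (fun p => f p * g p) (hf.mul hg) hsf.mul_right j
  have hptw : ∀ p, fderiv ℝ (fun q => f q * g q) p (Pi.single j 1)
      = f p * fderiv ℝ g p (Pi.single j 1) + g p * fderiv ℝ f p (Pi.single j 1) := by
    intro p
    rw [fderiv_fun_mul (hf.differentiable (by simp) p) (hg.differentiable (by simp) p)]
    simp
  simp only [hptw] at h0
  have IA : Integrable (fun p => f p * fderiv ℝ g p (Pi.single j 1)) :=
    (hf.continuous.mul (hdc g hg)).integrable_of_hasCompactSupport hsf.mul_right
  have IB : Integrable (fun p => g p * fderiv ℝ f p (Pi.single j 1)) :=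
    (hg.continuous.mul (hdc f hf)).integrable_of_hasCompactSupport
      (HasCompactSupport.mul_left ((HasCompactSupport.fderiv ℝ hsf).comp_left
        (g := fun L : (Fin 2 → ℝ) →L[ℝ] ℝ => L (Pi.single j 1)) rfl))
  rw [integral_add IA IB] at h0
  calc ∫ p, fderiv ℝ f p (Pi.single j 1) * g p
      = ∫ p, g p * fderiv ℝ f p (Pi.single j 1) := by simp_rw [mul_comm]
    _ = - ∫ p, f p * fderiv ℝ g p (Pi.single j 1) := by linarith

lemma hcs_sub {f g : (Fin 2 → ℝ) → ℝ} (hf : HasCompactSupport f)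
    (hg : HasCompactSupport g) : HasCompactSupport fun p => f p - g p := by
  apply HasCompactSupport.intro (hf.union hg)
  intro x hx
  simp only [Set.mem_union] at hx
  push_neg at hx
  rw [image_eq_zero_of_notMem_tsupport hx.1, image_eq_zero_of_notMem_tsupport hx.2, sub_zero]

lemma cross (f g : (Fin 2 → ℝ) → ℝ) (hf : ContDiff ℝ (⊤ : ℕ∞) f) (hg : ContDiff ℝ (⊤ : ℕ∞) g)
    (hsf : HasCompactSupport f) :
    ∫ p, (fderiv ℝ f p (Pi.single 0 1) * fderiv ℝ g p (Pi.single 1 1)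
      - fderiv ℝ f p (Pi.single 1 1) * fderiv ℝ g p (Pi.single 0 1)) = 0 := by
  have hDg : ∀ j : Fin 2, ContDiff ℝ (⊤ : ℕ∞) fun p => fderiv ℝ g p (Pi.single j 1) :=
    fun j => (hg.fderiv_right (by simp)).clm_apply contDiff_const
  have hDfc : ∀ j : Fin 2, Continuous fun p => fderiv ℝ f p (Pi.single j 1) :=
    fun j => (hf.continuous_fderiv (by simp)).clm_apply continuous_const
  have hDfs : ∀ j : Fin 2, HasCompactSupport fun p => fderiv ℝ f p (Pi.single j 1) :=
    fun j => (HasCompactSupport.fderiv ℝ hsf).comp_left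
      (g := fun L : (Fin 2 → ℝ) →L[ℝ] ℝ => L (Pi.single j 1)) rfl
  have h1 := ibp f (fun p => fderiv ℝ g p (Pi.single 1 1)) hf (hDg 1) hsf 0
  have h2 := ibp f (fun p => fderiv ℝ g p (Pi.single 0 1)) hf (hDg 0) hsf 1
  have hmx : ∀ p, fderiv ℝ (fun q => fderiv ℝ g q (Pi.single 1 1)) p (Pi.single 0 1)
      = fderiv ℝ (fun q => fderiv ℝ g q (Pi.single 0 1)) p (Pi.single 1 1) :=
    fun p => mixed g hg p _ _
  simp only [hmx] at h1
  have IA : Integrable (fun p => fderiv ℝ f p (Pi.single 0 1) * fderiv ℝ g p (Pi.single 1 1)) :=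
    ((hDfc 0).mul (hDg 1).continuous).integrable_of_hasCompactSupport (hDfs 0).mul_right
  have IB : Integrable (fun p => fderiv ℝ f p (Pi.single 1 1) * fderiv ℝ g p (Pi.single 0 1)) :=
    ((hDfc 1).mul (hDg 0).continuous).integrable_of_hasCompactSupport (hDfs 1).mul_right
  rw [integral_sub IA IB, h1, h2]
  ring

end Stmt5Aux


open Stmt5Aux in
/-- The identity `∫ (rot u)² + 2 ∫ (div u)² = 2 ∫ ‖ε(u)‖_F²`
for smooth compactly supported `u : ℝ² → ℝ²`. -/
theorem stmt5 (u : (Fin 2 → ℝ) → (Fin 2 → ℝ))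
    (hu : ContDiff ℝ (⊤ : ℕ∞) u) (hsupp : HasCompactSupport u) :
    (∫ p, (rotv u p) ^ 2) + 2 * ∫ p, (divg u p) ^ 2 =
      2 * ∫ p, frobSq (epsl u p) := by
  have hui : ∀ i : Fin 2, ContDiff ℝ (⊤ : ℕ∞) fun q => u q i := fun i => contDiff_pi.mp hu i
  have hsi : ∀ i : Fin 2, HasCompactSupport fun q => u q i :=
    fun i => hsupp.comp_left (g := fun w : Fin 2 → ℝ => w i) rfl
  have hjac : ∀ (p : Fin 2 → ℝ) (i j : Fin 2),
      jac u p i j = fderiv ℝ (fun q => u q i) p (Pi.single j 1) := by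
    intro p i j
    have h := fderiv_pi (𝕜 := ℝ) (x := p) (φ := fun i q => u q i)
      (fun i => ((hui i).differentiable (by simp)) p)
    unfold jac
    rw [h]
    simp
  have hjc : ∀ i j : Fin 2, Continuous fun p => jac u p i j := by
    intro i j
    simp only [hjac]
    exact ((hui i).continuous_fderiv (by simp)).clm_apply continuous_const
  have hjs : ∀ i j : Fin 2, HasCompactSupport fun p => jac u p i j := by
    intro i j
    simp only [hjac]
    exact (HasCompactSupport.fderiv ℝ (hsi i)).comp_left
      (g := fun L : (Fin 2 → ℝ) →L[ℝ] ℝ => L (Pi.single j 1)) rfl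
  have hD : ∫ p, (jac u p 0 0 * jac u p 1 1 - jac u p 0 1 * jac u p 1 0) = 0 := by
    simp only [hjac]
    exact cross (fun q => u q 0) (fun q => u q 1) (hui 0) (hui 1) (hsi 0)
  have hrot : ∀ p, rotv u p = jac u p 1 0 - jac u p 0 1 := fun p => rfl
  have hdiv : ∀ p, divg u p = jac u p 0 0 + jac u p 1 1 := by
    intro p; simp [divg, Matrix.trace_fin_two]
  have heps : ∀ p, frobSq (epsl u p)
      = (jac u p 0 0)^2 + (jac u p 1 1)^2 + (jac u p 0 1 + jac u p 1 0)^2/2 := by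
    intro p
    simp only [frobSq, epsl, Fin.sum_univ_two, Matrix.smul_apply, Matrix.add_apply,
      Matrix.transpose_apply, smul_eq_mul]
    ring
  have sq_int : ∀ f : (Fin 2 → ℝ) → ℝ, Continuous f → HasCompactSupport f →
      Integrable fun p => (f p)^2 := fun f hc hs =>
    (hc.pow 2).integrable_of_hasCompactSupport
      (hs.comp_left (g := fun x : ℝ => x ^ 2) (by simp) :)
  have I1 : Integrable (fun p => (jac u p 1 0 - jac u p 0 1)^2) :=
    sq_int _ ((hjc 1 0).sub (hjc 0 1)) (hcs_sub (hjs 1 0) (hjs 0 1))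
  have I2 : Integrable (fun p => (jac u p 0 0 + jac u p 1 1)^2) :=
    sq_int _ ((hjc 0 0).add (hjc 1 1)) ((hjs 0 0).add (hjs 1 1))
  have I3 : Integrable (fun p =>
      (jac u p 0 0)^2 + (jac u p 1 1)^2 + (jac u p 0 1 + jac u p 1 0)^2/2) := by
    refine Integrable.add (Integrable.add ?_ ?_) ?_
    · exact sq_int _ (hjc 0 0) (hjs 0 0)
    · exact sq_int _ (hjc 1 1) (hjs 1 1)
    · exact (sq_int _ ((hjc 0 1).add (hjc 1 0)) ((hjs 0 1).add (hjs 1 0))).div_const 2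
  have I4 : Integrable (fun p => jac u p 0 0 * jac u p 1 1 - jac u p 0 1 * jac u p 1 0) :=
    Integrable.sub
      (((hjc 0 0).mul (hjc 1 1)).integrable_of_hasCompactSupport (hjs 0 0).mul_right)
      (((hjc 0 1).mul (hjc 1 0)).integrable_of_hasCompactSupport (hjs 0 1).mul_right)
  simp only [hrot, hdiv, heps]
  calc (∫ p, (jac u p 1 0 - jac u p 0 1)^2) + 2 * ∫ p, (jac u p 0 0 + jac u p 1 1)^2
      = ∫ p, ((jac u p 1 0 - jac u p 0 1)^2 + 2*(jac u p 0 0 + jac u p 1 1)^2) := by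
        rw [← integral_const_mul _ _, integral_add I1 (I2.const_mul 2)]
    _ = ∫ p, (2*((jac u p 0 0)^2 + (jac u p 1 1)^2 + (jac u p 0 1 + jac u p 1 0)^2/2)
          + 4*(jac u p 0 0 * jac u p 1 1 - jac u p 0 1 * jac u p 1 0)) := by
        congr 1; funext p; ring
    _ = 2*(∫ p, ((jac u p 0 0)^2 + (jac u p 1 1)^2 + (jac u p 0 1 + jac u p 1 0)^2/2))
          + 4*(∫ p, (jac u p 0 0 * jac u p 1 1 - jac u p 0 1 * jac u p 1 0)) := by
        rw [integral_add (I3.const_mul 2) (I4.const_mul 4), integral_const_mul _ _,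
          integral_const_mul _ _]
    _ = 2 * ∫ p, ((jac u p 0 0)^2 + (jac u p 1 1)^2 + (jac u p 0 1 + jac u p 1 0)^2/2) := by
        rw [hD]; ring
end

section
/- Let H be a real inner product space, let p, q ∈ H, let Y ≥ 0 be a real number, and let μ, λ, t, c_F > 0 be real parameters. If ‖q‖ ≤ c_F · Y, then μ Y² + λ t⁻² ‖p − q‖² ≥ (μ/2) Y² + ( μ λ t⁻² / (μ + 2 c_F² λ t⁻²) ) ‖p‖². -/
/-- The coercivity estimate at the heart of Lemma 2.1: if `‖q‖ ≤ c_F Y` then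
`μ Y² + λ t⁻² ‖p − q‖² ≥ (μ/2) Y² + (μ λ t⁻² / (μ + 2 c_F² λ t⁻²)) ‖p‖²`. -/
theorem stmt7 {H : Type*} [NormedAddCommGroup H] [InnerProductSpace ℝ H]
    (p q : H) (Y μ lam t cF : ℝ)
    (hY : 0 ≤ Y) (hμ : 0 < μ) (hlam : 0 < lam) (ht : 0 < t) (hcF : 0 < cF)
    (hq : ‖q‖ ≤ cF * Y) :
    μ * Y ^ 2 + lam * (t ^ 2)⁻¹ * ‖p - q‖ ^ 2 ≥
      (μ / 2) * Y ^ 2 +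
        (μ * (lam * (t ^ 2)⁻¹) / (μ + 2 * cF ^ 2 * (lam * (t ^ 2)⁻¹))) * ‖p‖ ^ 2 := by
  set s := lam * (t ^ 2)⁻¹ with hs'
  have hs : 0 < s := by positivity
  have hd : 0 < μ + 2 * cF ^ 2 * s := by positivity
  have hc : ‖p‖ ≤ ‖p - q‖ + ‖q‖ := by
    calc ‖p‖ = ‖(p - q) + q‖ := by rw [sub_add_cancel]
    _ ≤ ‖p - q‖ + ‖q‖ := norm_add_le _ _
  set a := ‖p - q‖ with ha'
  set b := ‖q‖ with hb'
  set c := ‖p‖ with hc'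
  have ha : 0 ≤ a := norm_nonneg _
  have hb : 0 ≤ b := norm_nonneg _
  have hcn : 0 ≤ c := norm_nonneg _
  have key : μ * s * c ^ 2 ≤ ((μ / 2) * Y ^ 2 + s * a ^ 2) * (μ + 2 * cF ^ 2 * s) := by
    nlinarith [sq_nonneg (μ * Y - 2 * cF * s * a), mul_pos hμ hs,
      mul_le_mul hq hq hb (by positivity : (0:ℝ) ≤ cF * Y),
      mul_le_mul hc hc hcn (by positivity : (0:ℝ) ≤ a + b),
      mul_nonneg (mul_nonneg hμ.le hs.le) (mul_nonneg ha hb),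
      mul_nonneg hs.le (sq_nonneg a), mul_pos hμ hs,
      mul_le_mul_of_nonneg_left hq (mul_nonneg (mul_nonneg hμ.le hs.le) ha)]
  have h2 : μ * s / (μ + 2 * cF ^ 2 * s) * c ^ 2 ≤ (μ / 2) * Y ^ 2 + s * a ^ 2 := by
    rw [div_mul_eq_mul_div, div_le_iff₀ hd]
    linarith [key]
  have h3 : (μ / 2) * Y ^ 2 ≤ μ * Y ^ 2 - (μ / 2) * Y ^ 2 := by nlinarith [sq_nonneg Y]
  linarith [h2]
end

section
/- Let L be a real inner product space, W and Θ real vector spaces, G : W → L and J : Θ → L linear maps, a : Θ × Θ → ℝ a bilinear form, g : W → ℝ a linear functional, and λ, t > 0. Let ω, ω_h, w ∈ W, φ, φ_h, β ∈ Θ, ρ ∈ L, and set γ = λ t⁻² (Gω − Jφ) and γ_h = λ t⁻² (Gω_h − ρ). Assume (i) a(φ, ψ) + ⟨γ, Gv − Jψ⟩ = g(v) for all v ∈ W and ψ ∈ Θ, and (ii) ρ − Jφ_h = Gw − Jβ. Define Res₁(v) = g(v) − ⟨γ_h, Gv⟩ and Res₂(ψ) = −a(φ_h, ψ) + ⟨γ_h,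 Jψ⟩. Then a(φ − φ_h, φ − φ_h) + λ⁻¹ t² ‖γ − γ_h‖² = Res₁(ω − ω_h + w) + Res₂(φ − φ_h + β) − a(φ − φ_h, β). -/
/-!
Subtracting the discrete shear stress from the continuous one and inserting the Helmholtz
decomposition gives `γ - γh = λ t⁻² (G v - J ψ)` with `v = ω - ωh + w` and `ψ = φ - φh + β`.
Hence `λ⁻¹ t² ‖γ - γh‖² = ⟪γ - γh, G v - J ψ⟫`, and testing the continuous problem with
`(v, ψ)` turns this inner product into residuals, up to `a (φ - φh) ψ`.
-/

open RealInnerProductSpace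

namespace ReissnerMindlin

variable {L W Θ : Type*} [NormedAddCommGroup L] [InnerProductSpace ℝ L]
  [AddCommGroup W] [Module ℝ W] [AddCommGroup Θ] [Module ℝ Θ]
  (G : W →ₗ[ℝ] L) (Jm : Θ →ₗ[ℝ] L) (a : Θ →ₗ[ℝ] Θ →ₗ[ℝ] ℝ) (g : W →ₗ[ℝ] ℝ)

def res₁ (γh : L) (v : W) : ℝ := g v - ⟪γh, G v⟫

def res₂ (φh : Θ) (γh : L) (ψ : Θ) : ℝ := -(a φh ψ) + ⟪γh, Jm ψ⟫

theorem inv_mul_norm_sq_eq_inner_of_eq_smul {c : ℝ} (hc : c ≠ 0) {x y : L} (h : x = c • y) :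
    c⁻¹ * ‖x‖ ^ 2 = ⟪x, y⟫ := by
  rw [show y = c⁻¹ • x by rw [h, smul_smul, inv_mul_cancel₀ hc, one_smul],
    real_inner_smul_right, real_inner_self_eq_norm_sq]

theorem sub_eq_smul_of_helmholtz {c : ℝ} {ω ωh w : W} {φ φh β : Θ} {ρ γ γh : L}
    (hγ : γ = c • (G ω - Jm φ)) (hγh : γh = c • (G ωh - ρ))
    (hii : ρ - Jm φh = G w - Jm β) :
    γ - γh = c • (G (ω - ωh + w) - Jm (φ - φh + β)) := by
  have hρ : ρ = G w - Jm β + Jm φh := by rw [← hii, sub_add_cancel]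
  rw [hγ, hγh, hρ, ← smul_sub]
  simp only [map_add, map_sub]
  abel_nf

theorem inner_sub_eq_res {φ φh : Θ} {γ γh : L}
    (hi : ∀ (v : W) (ψ : Θ), a φ ψ + ⟪γ, G v - Jm ψ⟫ = g v) (v : W) (ψ : Θ) :
    ⟪γ - γh, G v - Jm ψ⟫ = res₁ G g γh v + res₂ Jm a φh γh ψ - a (φ - φh) ψ := by
  have hγ : ⟪γ, G v - Jm ψ⟫ = g v - a φ ψ := eq_sub_of_add_eq' (hi v ψ)
  rw [inner_sub_left, hγ, inner_sub_right, map_sub, LinearMap.sub_apply, res₁, res₂]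
  ring

end ReissnerMindlin

open ReissnerMindlin in
/-- Lemma 3.3 of the paper (the residual identity), stated abstractly:
`L` plays the role of `L²(Ω)²`, `G` of the gradient, `Jm` of the inclusion
`H¹₀(Ω)² ↪ L²(Ω)²`, `a` of the elasticity bilinear form, `g` of the load
functional, `ρ` of `R_hφ_h`; hypothesis `hi` is the continuous problem and
`hii` the Helmholtz decomposition `(R_h − I)φ_h = ∇w − β`. -/
theorem stmt9 {L W Θ : Type*} [NormedAddCommGroup L] [InnerProductSpace ℝ L]
    [AddCommGroup W] [Module ℝ W] [AddCommGroup Θ] [Module ℝ Θ]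
    (G : W →ₗ[ℝ] L) (Jm : Θ →ₗ[ℝ] L) (a : Θ →ₗ[ℝ] Θ →ₗ[ℝ] ℝ) (g : W →ₗ[ℝ] ℝ)
    (lam t : ℝ) (hlam : 0 < lam) (ht : 0 < t)
    (ω ωh w : W) (φ φh β : Θ) (ρ : L) (γ γh : L)
    (hγ : γ = (lam * (t ^ 2)⁻¹) • (G ω - Jm φ))
    (hγh : γh = (lam * (t ^ 2)⁻¹) • (G ωh - ρ))
    (hi : ∀ (v : W) (ψ : Θ), a φ ψ + ⟪γ, G v - Jm ψ⟫ = g v)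
    (hii : ρ - Jm φh = G w - Jm β) :
    a (φ - φh) (φ - φh) + lam⁻¹ * t ^ 2 * ‖γ - γh‖ ^ 2 =
      (g (ω - ωh + w) - ⟪γh, G (ω - ωh + w)⟫) +
        (-(a φh (φ - φh + β)) + ⟪γh, Jm (φ - φh + β)⟫) -
        a (φ - φh) β := by
  have hc : lam * (t ^ 2)⁻¹ ≠ 0 := by positivity
  have hscale : lam⁻¹ * t ^ 2 = (lam * (t ^ 2)⁻¹)⁻¹ := by rw [mul_inv, inv_inv]
  rw [hscale, inv_mul_norm_sq_eq_inner_of_eq_smul hc (sub_eq_smul_of_helmholtz G Jm hγ hγh hii),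
    inner_sub_eq_res G Jm a g hi, map_add, res₁, res₂]
  ring
end

section
/- For every smooth compactly supported function v : (0,1)² → ℝ (i.e. v smooth on ℝ² with compact support contained in the open unit square) one has ∫ v² dx ≤ (1/(2π²)) ∫ ‖∇v‖² dx; equivalently, the Poincaré–Friedrichs inequality ‖v‖_{L²} ≤ (1/(√2 π)) ‖∇v‖_{L²} holds on the unit square. -/
open MeasureTheory Set Real

noncomputable def ctn (x : ℝ) : ℝ := Real.pi * Real.cos (Real.pi * x) / Real.sin (Real.pi * x)

lemma hasDerivAt_sin_pi (x : ℝ) :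
    HasDerivAt (fun y : ℝ => Real.sin (Real.pi * y)) (Real.cos (Real.pi * x) * Real.pi) x := by
  simpa [Function.comp_def] using (Real.hasDerivAt_sin (Real.pi * x)).comp x
    ((hasDerivAt_id x).const_mul Real.pi)

lemma hasDerivAt_cos_pi (x : ℝ) :
    HasDerivAt (fun y : ℝ => Real.pi * Real.cos (Real.pi * y))
      (Real.pi * (-Real.sin (Real.pi * x) * Real.pi)) x := by
  simpa using ((Real.hasDerivAt_cos (Real.pi * x)).comp x
    ((hasDerivAt_id x).const_mul Real.pi)).const_mul Real.pi

lemma hasDerivAt_ctn {x : ℝ} (hx : Real.sin (Real.pi * x) ≠ 0) :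
    HasDerivAt ctn (-(Real.pi ^ 2 + ctn x ^ 2)) x := by
  have h := (hasDerivAt_cos_pi x).div (hasDerivAt_sin_pi x) hx
  refine (show HasDerivAt ctn _ x from h).congr_deriv ?_
  symm
  have hpyth := Real.sin_sq_add_cos_sq (Real.pi * x)
  unfold ctn
  field_simp
  nlinarith [sq_nonneg (Real.sin (Real.pi * x))]

lemma poincare1D (u : ℝ → ℝ) (hu : ContDiff ℝ (⊤ : ℕ∞) u) (hc : HasCompactSupport u)
    (hs : tsupport u ⊆ Set.Ioo 0 1) :
    ∫ x, u x ^ 2 ≤ (1 / Real.pi ^ 2) * ∫ x, (deriv u x) ^ 2 := by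
  have hπ : (0:ℝ) < Real.pi ^ 2 := by positivity
  rcases eq_empty_or_nonempty (tsupport u) with hemp | hne
  · have hu0 : u = 0 := by
      ext x
      exact image_eq_zero_of_notMem_tsupport (by simp [hemp])
    subst hu0
    have : (∫ x : ℝ, deriv (0 : ℝ → ℝ) x ^ 2) ≥ 0 := integral_nonneg fun x => sq_nonneg _
    simp only [Pi.zero_apply]
    norm_num
  -- nonempty case
  have hK : IsCompact (tsupport u) := hc
  set a := sInf (tsupport u) with ha_def
  set b := sSup (tsupport u) with hb_def
  have haK : a ∈ tsupport u := hK.sInf_mem hne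
  have hbK : b ∈ tsupport u := hK.sSup_mem hne
  have ha : a ∈ Set.Ioo (0:ℝ) 1 := hs haK
  have hb : b ∈ Set.Ioo (0:ℝ) 1 := hs hbK
  have hab : a ≤ b := csInf_le_csSup hne hK.bddBelow hK.bddAbove
  set A := a / 2 with hA_def
  set B := (b + 1) / 2 with hB_def
  have hA0 : 0 < A := by simp [hA_def]; linarith [ha.1]
  have hAa : A < a := by simp [hA_def]; linarith [ha.1]
  have hbB : b < B := by simp [hB_def]; linarith [hb.2]
  have hB1 : B < 1 := by simp [hB_def]; linarith [hb.2]
  have hAB : A < B := lt_trans hAa (lt_of_le_of_lt hab hbB)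
  have hKab : tsupport u ⊆ Set.Icc a b := subset_Icc_csInf_csSup hK.bddBelow hK.bddAbove
  have hvan : ∀ x, x ∉ Set.Icc a b → u x = 0 := by
    intro x hx
    exact image_eq_zero_of_notMem_tsupport (fun hmem => hx (hKab hmem))
  have hvanIoc : ∀ x, x ∉ Set.Ioc A B → u x = 0 := by
    intro x hx
    refine hvan x (fun hmem => hx ⟨lt_of_lt_of_le hAa hmem.1, le_trans hmem.2 hbB.le⟩)
  have hvanA : u A = 0 := hvan A (fun h => absurd h.1 (not_le.mpr hAa))
  have hvanB : u B = 0 := hvan B (fun h => absurd h.2 (not_le.mpr hbB))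
  have hdvanIoc : ∀ x, x ∉ Set.Ioc A B → deriv u x = 0 := by
    intro x hx
    by_contra h
    have hmem : x ∈ tsupport u := support_deriv_subset (by simpa using h)
    exact hx ⟨lt_of_lt_of_le hAa (hKab hmem).1, le_trans (hKab hmem).2 hbB.le⟩
  have hsin : ∀ x ∈ Set.uIcc A B, 0 < Real.sin (Real.pi * x) := by
    intro x hx
    rw [Set.uIcc_of_le hAB.le] at hx
    have h0 : 0 < x := lt_of_lt_of_le hA0 hx.1
    have h1 : x < 1 := lt_of_le_of_lt hx.2 hB1
    have hπ0 := Real.pi_pos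
    exact Real.sin_pos_of_pos_of_lt_pi (by positivity) (by nlinarith)
  -- whole line reduces to interval
  have hconv : ∀ (f : ℝ → ℝ), (∀ x, x ∉ Set.Ioc A B → f x = 0) →
      ∫ x, f x = ∫ x in A..B, f x := by
    intro f hf
    rw [intervalIntegral.integral_of_le hAB.le,
      setIntegral_eq_integral_of_forall_compl_eq_zero hf]
  rw [hconv _ (fun x hx => by simp [hvanIoc x hx]),
      hconv _ (fun x hx => by simp [hdvanIoc x hx])]
  -- continuity facts
  have hucont : Continuous u := hu.continuous
  have hdcont : Continuous (deriv u) := hu.continuous_deriv (by simp)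
  have hctn : ContinuousOn ctn (Set.uIcc A B) := by
    apply ContinuousOn.div
      ((continuous_const.mul (Real.continuous_cos.comp
        (continuous_const.mul continuous_id))).continuousOn)
      ((Real.continuous_sin.comp (continuous_const.mul continuous_id)).continuousOn)
    exact fun x hx => (hsin x hx).ne'
  set d := deriv u with hd_def
  have hdersq : ∀ x ∈ Set.uIcc A B, HasDerivAt (fun y => u y ^ 2) (2 * u x * d x) x := by
    intro x _
    have := ((hu.differentiable (by simp) x).hasDerivAt).pow 2
    simpa [Function.comp_def, Pi.pow_def, mul_comm, mul_assoc, mul_left_comm] using this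
  have hderc : ∀ x ∈ Set.uIcc A B, HasDerivAt ctn (-(Real.pi ^ 2 + ctn x ^ 2)) x :=
    fun x hx => hasDerivAt_ctn (hsin x hx).ne'
  have hcud : Continuous fun x => 2 * u x * d x := (continuous_const.mul hucont).mul hdcont
  have i1 : IntervalIntegrable (fun x => 2 * u x * d x) volume A B :=
    hcud.intervalIntegrable A B
  have i2 : IntervalIntegrable (fun x => -(Real.pi ^ 2 + ctn x ^ 2)) volume A B :=
    (((continuousOn_const.add (hctn.pow 2)).neg)).intervalIntegrable
  have hibp := intervalIntegral.integral_mul_deriv_eq_deriv_mul hdersq hderc i1 i2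
  rw [hvanA, hvanB] at hibp
  -- ∫ u^2 * (-(π^2+c^2)) = 0 - 0 - ∫ (2 u d) c
  have hcross : ∫ x in A..B, (2 * u x * d x) * ctn x
      = ∫ x in A..B, (Real.pi ^ 2 * u x ^ 2 + (u x * ctn x) ^ 2) := by
    have h1 : ∫ x in A..B, u x ^ 2 * -(Real.pi ^ 2 + ctn x ^ 2)
        = - ∫ x in A..B, (Real.pi ^ 2 * u x ^ 2 + (u x * ctn x) ^ 2) := by
      rw [← intervalIntegral.integral_neg]
      apply intervalIntegral.integral_congr
      intro x _
      ring
    rw [h1] at hibp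
    linarith [hibp]
  -- integrabilities for expansion
  have iuc2 : IntervalIntegrable (fun x => (u x * ctn x) ^ 2) volume A B :=
    ((hucont.continuousOn.mul hctn).pow 2).intervalIntegrable
  have id2 : IntervalIntegrable (fun x => d x ^ 2) volume A B :=
    ((hdcont.pow 2)).intervalIntegrable A B
  have icrs : IntervalIntegrable (fun x => (2 * u x * d x) * ctn x) volume A B :=
    ((hcud.continuousOn.mul hctn)).intervalIntegrable
  have isum : IntervalIntegrable (fun x => Real.pi ^ 2 * u x ^ 2 + (u x * ctn x) ^ 2) volume A B :=
    ((continuousOn_const.mul ((hucont.pow 2).continuousOn)).add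
      ((hucont.continuousOn.mul hctn).pow 2)).intervalIntegrable
  have hexp : (0:ℝ) ≤ ∫ x in A..B, (d x - u x * ctn x) ^ 2 :=
    intervalIntegral.integral_nonneg hAB.le (fun x _ => sq_nonneg _)
  have hsplit : ∫ x in A..B, (d x - u x * ctn x) ^ 2
      = (∫ x in A..B, d x ^ 2) - (∫ x in A..B, (2 * u x * d x) * ctn x)
        + ∫ x in A..B, (u x * ctn x) ^ 2 := by
    rw [← intervalIntegral.integral_sub id2 icrs,
      ← intervalIntegral.integral_add (id2.sub icrs) iuc2]
    apply intervalIntegral.integral_congr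
    intro x _
    ring
  have hsum : ∫ x in A..B, (Real.pi ^ 2 * u x ^ 2 + (u x * ctn x) ^ 2)
      = Real.pi ^ 2 * (∫ x in A..B, u x ^ 2) + ∫ x in A..B, (u x * ctn x) ^ 2 := by
    rw [intervalIntegral.integral_add (by
        exact (continuousOn_const.mul ((hucont.pow 2).continuousOn)).intervalIntegrable) iuc2,
      intervalIntegral.integral_const_mul]
  have key : Real.pi ^ 2 * (∫ x in A..B, u x ^ 2) ≤ ∫ x in A..B, d x ^ 2 := by
    rw [hsplit, hcross, hsum] at hexp
    linarith
  have h2 : (1 / Real.pi ^ 2) * (Real.pi ^ 2 * ∫ x in A..B, u x ^ 2)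
      = ∫ x in A..B, u x ^ 2 := by
    field_simp
  calc ∫ x in A..B, u x ^ 2
      = (1 / Real.pi ^ 2) * (Real.pi ^ 2 * ∫ x in A..B, u x ^ 2) := h2.symm
    _ ≤ (1 / Real.pi ^ 2) * ∫ x in A..B, d x ^ 2 :=
        mul_le_mul_of_nonneg_left key (by positivity)


lemma hasDerivAt_slice0 (y s : ℝ) :
    HasDerivAt (fun t : ℝ => (![t, y] : Fin 2 → ℝ)) (Pi.single 0 1) s := by
  rw [hasDerivAt_pi]
  intro i
  fin_cases i
  · simpa [Pi.single] using hasDerivAt_id' s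
  · simpa [Pi.single] using hasDerivAt_const s y

lemma hasDerivAt_slice1 (x s : ℝ) :
    HasDerivAt (fun t : ℝ => (![x, t] : Fin 2 → ℝ)) (Pi.single 1 1) s := by
  rw [hasDerivAt_pi]
  intro i
  fin_cases i
  · simpa [Pi.single] using hasDerivAt_const s x
  · simpa [Pi.single] using hasDerivAt_id' s

lemma contDiff_slice0 (y : ℝ) : ContDiff ℝ (⊤ : ℕ∞) (fun t : ℝ => (![t, y] : Fin 2 → ℝ)) := by
  rw [contDiff_pi]
  intro i
  fin_cases i
  · simpa using contDiff_fun_id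
  · simpa using contDiff_const (c := y)

lemma contDiff_slice1 (x : ℝ) : ContDiff ℝ (⊤ : ℕ∞) (fun t : ℝ => (![x, t] : Fin 2 → ℝ)) := by
  rw [contDiff_pi]
  intro i
  fin_cases i
  · simpa using contDiff_const (c := x)
  · simpa using contDiff_fun_id

lemma fub (f : (Fin 2 → ℝ) → ℝ) (hf : Integrable f) :
    (∫ p, f p) = ∫ x, ∫ y, f ![x, y] := by
  have hmp := (volume_preserving_finTwoArrow ℝ).symm
  have h1 : (∫ z : ℝ × ℝ, f (MeasurableEquiv.finTwoArrow.symm z)) = ∫ p, f p :=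
    hmp.integral_comp (MeasurableEquiv.measurableEmbedding _) f
  have h2 : Integrable (fun z : ℝ × ℝ => f (MeasurableEquiv.finTwoArrow.symm z)) :=
    hmp.integrable_comp_emb (MeasurableEquiv.measurableEmbedding _) |>.mpr hf
  rw [← h1]
  rw [MeasureTheory.Measure.volume_eq_prod] at h2 ⊢
  rw [integral_prod _ h2]
  simp only [MeasurableEquiv.finTwoArrow_symm_apply]
  have : ∀ (x y : ℝ), (Fin.cons x (Fin.cons y finZeroElim) : Fin 2 → ℝ) = ![x, y] := by
    intro x y
    ext i
    fin_cases i <;> rfl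
  simp only [this]

lemma cons_fin2 (x y : ℝ) : (Fin.cons x (Fin.cons y finZeroElim) : Fin 2 → ℝ) = ![x, y] := by
  ext i
  fin_cases i <;> rfl

lemma fub' (f : (Fin 2 → ℝ) → ℝ) (hf : Integrable f) :
    Integrable (fun z : ℝ × ℝ => f ![z.1, z.2]) ((volume : Measure ℝ).prod volume) := by
  have hmp := (volume_preserving_finTwoArrow ℝ).symm
  have h2 : Integrable (fun z : ℝ × ℝ => f (MeasurableEquiv.finTwoArrow.symm z)) :=
    (hmp.integrable_comp_emb (MeasurableEquiv.measurableEmbedding _)).mpr hf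
  rw [MeasureTheory.Measure.volume_eq_prod] at h2
  simpa only [MeasurableEquiv.finTwoArrow_symm_apply, cons_fin2] using h2

/-- Poincaré–Friedrichs inequality on the unit square with the sharp constant
`c_F = 1/(√2 π)`: for every smooth function compactly supported in `(0,1)²`,
`∫ v² ≤ (1/(2π²)) ∫ ‖∇v‖²`. -/
theorem stmt12 (v : (Fin 2 → ℝ) → ℝ)
    (hv : ContDiff ℝ (⊤ : ℕ∞) v) (hsupp : HasCompactSupport v)
    (hsq : tsupport v ⊆ {p : Fin 2 → ℝ | ∀ i, p i ∈ Set.Ioo (0 : ℝ) 1}) :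
    (∫ p, (v p) ^ 2) ≤
      (1 / (2 * Real.pi ^ 2)) * ∫ p, ∑ i, (fderiv ℝ v p (Pi.single i 1)) ^ 2 := by
  have hπ : (0:ℝ) < Real.pi := Real.pi_pos
  set D : Fin 2 → (Fin 2 → ℝ) → ℝ := fun i p => fderiv ℝ v p (Pi.single i 1) with hD
  have hDc : ∀ i, Continuous (D i) := fun i =>
    ((hv.fderiv_right (m := 0) (by simp)).continuous).clm_apply continuous_const
  have hDsupp : ∀ i, HasCompactSupport (D i) := fun i => hsupp.fderiv_apply ℝ _
  have hsq2 : ∀ (f : (Fin 2 → ℝ) → ℝ), Continuous f → HasCompactSupport f →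
      Integrable (fun p => f p ^ 2) := by
    intro f hf hcf
    apply (hf.pow 2).integrable_of_hasCompactSupport
    rw [sq]; exact hcf.mul_right
  have hv2int : Integrable (fun p => v p ^ 2) := hsq2 v hv.continuous hsupp
  have hDint : ∀ i, Integrable (fun p => D i p ^ 2) := fun i => hsq2 _ (hDc i) (hDsupp i)
  -- one-direction estimates
  -- i = 1 (inner variable)
  have key1 : (∫ p, v p ^ 2) ≤ (1 / Real.pi ^ 2) * ∫ p, (D 1 p) ^ 2 := by
    rw [fub _ hv2int, fub _ (hDint 1)]
    have hmarg1 : Integrable (fun x => ∫ y, v ![x, y] ^ 2) :=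
      (fub' _ hv2int).integral_prod_left
    have hmarg2 : Integrable (fun x => (1 / Real.pi ^ 2) * ∫ y, (D 1 ![x, y]) ^ 2) :=
      ((fub' _ (hDint 1)).integral_prod_left).const_mul _
    calc (∫ x, ∫ y, v ![x, y] ^ 2)
        ≤ ∫ x, (1 / Real.pi ^ 2) * ∫ y, (D 1 ![x, y]) ^ 2 := by
          apply integral_mono hmarg1 hmarg2
          intro x
          set u : ℝ → ℝ := fun t => v ![x, t] with hu_def
          have hu : ContDiff ℝ (⊤ : ℕ∞) u := hv.comp (contDiff_slice1 x)
          have hcl : IsClosed {t : ℝ | (![x, t] : Fin 2 → ℝ) ∈ tsupport v} :=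
            (isClosed_tsupport v).preimage (contDiff_slice1 x).continuous
          have h1 : tsupport u ⊆ {t : ℝ | (![x, t] : Fin 2 → ℝ) ∈ tsupport v} := by
            apply closure_minimal _ hcl
            intro t ht
            exact subset_closure (by simpa [hu_def] using ht)
          have hts : tsupport u ⊆ Set.Ioo 0 1 := by
            intro t ht
            have := hsq (h1 ht) 1
            simpa using this
          have hcs : HasCompactSupport u :=
            isCompact_Icc.of_isClosed_subset (isClosed_tsupport u)
              (hts.trans Set.Ioo_subset_Icc_self)
          have hder : ∀ y : ℝ, deriv u y = D 1 ![x, y] := by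
            intro y
            exact (((hv.differentiable (by simp) ![x, y]).hasFDerivAt).comp_hasDerivAt y
              (hasDerivAt_slice1 x y)).deriv
          have := poincare1D u hu hcs hts
          have heq : (fun y => deriv u y ^ 2) = fun y => (D 1 ![x, y]) ^ 2 :=
            funext fun y => by rw [hder y]
          rw [heq] at this
          exact this
      _ = (1 / Real.pi ^ 2) * ∫ x, ∫ y, (D 1 ![x, y]) ^ 2 := integral_const_mul _ _
  -- i = 0 (outer variable); swap order of integration
  have key0 : (∫ p, v p ^ 2) ≤ (1 / Real.pi ^ 2) * ∫ p, (D 0 p) ^ 2 := by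
    have hswap : ∀ (f : (Fin 2 → ℝ) → ℝ), Integrable f →
        (∫ p, f p) = ∫ y, ∫ x, f ![x, y] := by
      intro f hf
      rw [fub _ hf]
      exact integral_integral_swap (fub' _ hf)
    rw [hswap _ hv2int, hswap _ (hDint 0)]
    have hmarg1 : Integrable (fun y => ∫ x, v ![x, y] ^ 2) := by
      simpa using ((fub' _ hv2int).swap).integral_prod_left
    have hmarg2 : Integrable (fun y => (1 / Real.pi ^ 2) * ∫ x, (D 0 ![x, y]) ^ 2) := by
      have := ((fub' _ (hDint 0)).swap).integral_prod_left
      exact (by simpa using this : Integrable (fun y => ∫ x, (D 0 ![x, y]) ^ 2)).const_mul _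
    calc (∫ y, ∫ x, v ![x, y] ^ 2)
        ≤ ∫ y, (1 / Real.pi ^ 2) * ∫ x, (D 0 ![x, y]) ^ 2 := by
          apply integral_mono hmarg1 hmarg2
          intro y
          set u : ℝ → ℝ := fun t => v ![t, y] with hu_def
          have hu : ContDiff ℝ (⊤ : ℕ∞) u := hv.comp (contDiff_slice0 y)
          have hcl : IsClosed {t : ℝ | (![t, y] : Fin 2 → ℝ) ∈ tsupport v} :=
            (isClosed_tsupport v).preimage (contDiff_slice0 y).continuous
          have h1 : tsupport u ⊆ {t : ℝ | (![t, y] : Fin 2 → ℝ) ∈ tsupport v} := by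
            apply closure_minimal _ hcl
            intro t ht
            exact subset_closure (by simpa [hu_def] using ht)
          have hts : tsupport u ⊆ Set.Ioo 0 1 := by
            intro t ht
            have := hsq (h1 ht) 0
            simpa using this
          have hcs : HasCompactSupport u :=
            isCompact_Icc.of_isClosed_subset (isClosed_tsupport u)
              (hts.trans Set.Ioo_subset_Icc_self)
          have hder : ∀ x : ℝ, deriv u x = D 0 ![x, y] := by
            intro x
            exact (((hv.differentiable (by simp) ![x, y]).hasFDerivAt).comp_hasDerivAt x
              (hasDerivAt_slice0 y x)).deriv
          have := poincare1D u hu hcs hts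
          have heq : (fun x => deriv u x ^ 2) = fun x => (D 0 ![x, y]) ^ 2 :=
            funext fun x => by rw [hder x]
          rw [heq] at this
          exact this
      _ = (1 / Real.pi ^ 2) * ∫ y, ∫ x, (D 0 ![x, y]) ^ 2 := integral_const_mul _ _
  -- combine
  have hsum : (∫ p, ∑ i, (D i p) ^ 2) = (∫ p, (D 0 p) ^ 2) + ∫ p, (D 1 p) ^ 2 := by
    have : (fun p => ∑ i, (D i p) ^ 2) = fun p => (D 0 p) ^ 2 + (D 1 p) ^ 2 := by
      funext p
      simp [Fin.sum_univ_two]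
    rw [this, integral_add (hDint 0) (hDint 1)]
  show (∫ p, v p ^ 2) ≤ (1 / (2 * Real.pi ^ 2)) * ∫ p, ∑ i, (D i p) ^ 2
  rw [hsum]
  have hne : (Real.pi : ℝ) ^ 2 ≠ 0 := by positivity
  have hid : (1 / (2 * Real.pi ^ 2)) * ((∫ p, (D 0 p) ^ 2) + ∫ p, (D 1 p) ^ 2)
      = (1/2) * ((1 / Real.pi ^ 2) * ∫ p, (D 0 p) ^ 2)
        + (1/2) * ((1 / Real.pi ^ 2) * ∫ p, (D 1 p) ^ 2) := by
    field_simp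
  rw [hid]
  linarith [key0, key1]
end

section
/- Let μ > 0 and λ̃ ≥ 0, and define, on symmetric 2×2 real matrices E, the elasticity tensor CE = 2μE + λ̃(tr E)I and its inverse square root C^{-1/2}E = (2μ)^{-1/2}(E − (tr E/2)I) + (2(μ+λ̃))^{-1/2}(tr E/2)I. Let x* : ℝ² → M₂(ℝ) be smooth with x*(p) symmetric for every p, let φ_h : ℝ² → ℝ² be smooth, set γ_h = −div x* (row-wise divergence), and assume p ↦ ‖C^{-1/2}(x*(p) − Cε(φ_h)(p))‖_F² is Lebesgue integrable on ℝ². Then for every smooth compactly supported ψ : ℝ² → ℝ², − ∫ Cε(φ_h) : ε(ψ) dx + ∫ γ_h · ψ dx ≤ ( ∫ ‖C^{-1/2}(x* − Cε(φ_h))‖_F² dx )^{1/2} · ( ∫ Cε(ψ) : ε(ψ) dx )^{1/2}. -/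
open MeasureTheory Matrix

/-- Row-wise divergence of a matrix field: `(div x)ᵢ = ∑ⱼ ∂ⱼ xᵢⱼ`. -/
noncomputable def divMat (x : (Fin 2 → ℝ) → Matrix (Fin 2) (Fin 2) ℝ)
    (p : Fin 2 → ℝ) : Fin 2 → ℝ :=
  fun i => ∑ j, fderiv ℝ (fun q => x q i j) p (Pi.single j 1)

/-- The elasticity tensor `CE = 2μE + λ̃(tr E)I`. -/
noncomputable def Cel (μ lamt : ℝ) (E : Matrix (Fin 2) (Fin 2) ℝ) :
    Matrix (Fin 2) (Fin 2) ℝ :=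
  (2 * μ) • E + (lamt * Matrix.trace E) • (1 : Matrix (Fin 2) (Fin 2) ℝ)

/-- The inverse square root of the elasticity tensor:
`C^{-1/2}E = (2μ)^{-1/2}(E − (tr E/2)I) + (2(μ+λ̃))^{-1/2}(tr E/2)I`. -/
noncomputable def CinvSqrt (μ lamt : ℝ) (E : Matrix (Fin 2) (Fin 2) ℝ) :
    Matrix (Fin 2) (Fin 2) ℝ :=
  (Real.sqrt (2 * μ))⁻¹ • (E - (Matrix.trace E / 2) • (1 : Matrix (Fin 2) (Fin 2) ℝ)) +
    (Real.sqrt (2 * (μ + lamt)))⁻¹ • ((Matrix.trace E / 2) • (1 : Matrix (Fin 2) (Fin 2) ℝ))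


/-- The square root of the elasticity tensor. -/
noncomputable def Csq (μ lamt : ℝ) (E : Matrix (Fin 2) (Fin 2) ℝ) :
    Matrix (Fin 2) (Fin 2) ℝ :=
  (Real.sqrt (2 * μ)) • (E - (Matrix.trace E / 2) • (1 : Matrix (Fin 2) (Fin 2) ℝ)) +
    (Real.sqrt (2 * (μ + lamt))) • ((Matrix.trace E / 2) • (1 : Matrix (Fin 2) (Fin 2) ℝ))

lemma frobSq_nonneg (A : Matrix (Fin 2) (Fin 2) ℝ) : 0 ≤ frobSq A := by
  unfold frobSq; positivity

lemma cs_pointwise (A B : Matrix (Fin 2) (Fin 2) ℝ) :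
    frobInner A B ≤ Real.sqrt (frobSq A) * Real.sqrt (frobSq B) := by
  have h2 : (frobInner A B)^2 ≤ frobSq A * frobSq B := by
    simp only [frobInner, frobSq, Fin.sum_univ_two]
    nlinarith [sq_nonneg (A 0 0 * B 0 1 - A 0 1 * B 0 0), sq_nonneg (A 0 0 * B 1 0 - A 1 0 * B 0 0),
      sq_nonneg (A 0 0 * B 1 1 - A 1 1 * B 0 0), sq_nonneg (A 0 1 * B 1 0 - A 1 0 * B 0 1),
      sq_nonneg (A 0 1 * B 1 1 - A 1 1 * B 0 1), sq_nonneg (A 1 0 * B 1 1 - A 1 1 * B 1 0)]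
  calc frobInner A B ≤ |frobInner A B| := le_abs_self _
    _ = Real.sqrt ((frobInner A B)^2) := (Real.sqrt_sq_eq_abs _).symm
    _ ≤ Real.sqrt (frobSq A * frobSq B) := Real.sqrt_le_sqrt h2
    _ = _ := Real.sqrt_mul (frobSq_nonneg A) _

open MeasureTheory in
lemma int_cs (f g : (Fin 2 → ℝ) → ℝ) (hf2 : Integrable (fun p => f p ^ 2))
    (hg2 : Integrable (fun p => g p ^ 2)) (hfg : Integrable (fun p => f p * g p)) :
    ∫ p, f p * g p ≤ Real.sqrt (∫ p, f p ^ 2) * Real.sqrt (∫ p, g p ^ 2) := by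
  set A := ∫ p, f p ^ 2 with hA
  set B := ∫ p, g p ^ 2 with hB
  set I := ∫ p, f p * g p with hI
  have hA0 : 0 ≤ A := integral_nonneg fun p => sq_nonneg _
  have hB0 : 0 ≤ B := integral_nonneg fun p => sq_nonneg _
  have key : ∀ t : ℝ, 0 ≤ A * (t * t) + (2 * I) * t + B := by
    intro t
    have hpos : (0:ℝ) ≤ ∫ p, (t * f p + g p) ^ 2 := integral_nonneg fun p => sq_nonneg _
    have expand : ∫ p, (t * f p + g p) ^ 2 = A * (t * t) + (2 * I) * t + B := by
      have hpw : ∀ p, (t * f p + g p) ^ 2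
          = t ^ 2 * f p ^ 2 + (2 * t) * (f p * g p) + g p ^ 2 := fun p => by ring
      simp_rw [hpw]
      rw [integral_add (f := fun p => t ^ 2 * f p ^ 2 + 2 * t * (f p * g p))
          (g := fun p => g p ^ 2) ((hf2.const_mul _).add (hfg.const_mul _)) hg2,
        integral_add (f := fun p => t ^ 2 * f p ^ 2) (g := fun p => 2 * t * (f p * g p))
          (hf2.const_mul _) (hfg.const_mul _), integral_const_mul, integral_const_mul]
      ring
    linarith [expand ▸ hpos]
  have hd : discrim A (2 * I) B ≤ 0 := discrim_le_zero key
  rw [discrim] at hd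
  have hI2 : I ^ 2 ≤ A * B := by nlinarith
  calc I ≤ |I| := le_abs_self _
    _ = Real.sqrt (I ^ 2) := (Real.sqrt_sq_eq_abs _).symm
    _ ≤ Real.sqrt (A * B) := Real.sqrt_le_sqrt hI2
    _ = _ := Real.sqrt_mul hA0 _

lemma alg1 (μ lamt : ℝ) (hμ : 0 < μ) (hlamt : 0 ≤ lamt) (A B : Matrix (Fin 2) (Fin 2) ℝ) :
    frobInner (CinvSqrt μ lamt A) (Csq μ lamt B) = frobInner A B := by
  have hα : Real.sqrt (2*μ) ≠ 0 := by positivity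
  have hβ : Real.sqrt (2*(μ+lamt)) ≠ 0 := by positivity
  simp only [frobInner, CinvSqrt, Csq, Matrix.trace, Matrix.diag, Fin.sum_univ_two,
    Matrix.add_apply, Matrix.sub_apply, Matrix.smul_apply, Matrix.one_apply, smul_eq_mul]
  norm_num
  field_simp
  ring

lemma alg2 (μ lamt : ℝ) (hμ : 0 < μ) (hlamt : 0 ≤ lamt) (B : Matrix (Fin 2) (Fin 2) ℝ) :
    frobSq (Csq μ lamt B) = frobInner (Cel μ lamt B) B := by
  simp only [frobSq, frobInner, Csq, Cel, Matrix.trace, Matrix.diag, Fin.sum_univ_two,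
    Matrix.add_apply, Matrix.sub_apply, Matrix.smul_apply, Matrix.one_apply, smul_eq_mul]
  norm_num
  ring_nf
  simp only [Real.sq_sqrt (by norm_num : (0:ℝ) ≤ 2), Real.sq_sqrt hμ.le,
    Real.sq_sqrt (by positivity : (0:ℝ) ≤ μ + lamt)]
  ring

open MeasureTheory in
lemma integral_fderiv_zero (h : (Fin 2 → ℝ) → ℝ) (hh : ContDiff ℝ (⊤ : ℕ∞) h)
    (hc : HasCompactSupport h) (v : Fin 2 → ℝ) : ∫ p, fderiv ℝ h p v = 0 := by
  obtain ⟨C, hC⟩ := ContDiff.lipschitzWith_of_hasCompactSupport hc hh (by simp)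
  have h0 := LipschitzWith.integral_lineDeriv_mul_eq (μ := volume)
    (LipschitzWith.const (b := (1:ℝ))) hC hc (-v)
  have hz : ∀ (p : Fin 2 → ℝ), lineDeriv ℝ (fun _ : Fin 2 → ℝ => (1:ℝ)) p (-v) = 0 := by
    intro p; simp [lineDeriv]
  simp only [hz, zero_mul, integral_zero, neg_neg, mul_one] at h0
  have heq : ∀ p, lineDeriv ℝ h p v = fderiv ℝ h p v := fun p =>
    (hh.differentiable (by simp) p).lineDeriv_eq_fderiv
  calc ∫ p, fderiv ℝ h p v = ∫ p, lineDeriv ℝ h p v :=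
        integral_congr_ae (Filter.Eventually.of_forall fun p => (heq p).symm)
    _ = 0 := h0.symm

lemma cont_fderiv_apply (f : (Fin 2 → ℝ) → ℝ) (hf : ContDiff ℝ (⊤ : ℕ∞) f) (v : Fin 2 → ℝ) :
    Continuous (fun p => fderiv ℝ f p v) :=
  (hf.continuous_fderiv (by simp)).clm_apply continuous_const

open MeasureTheory in
lemma byparts (f g : (Fin 2 → ℝ) → ℝ) (hf : ContDiff ℝ (⊤ : ℕ∞) f) (hg : ContDiff ℝ (⊤ : ℕ∞) g)
    (hcg : HasCompactSupport g) (v : Fin 2 → ℝ) :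
    ∫ p, fderiv ℝ f p v * g p = - ∫ p, f p * fderiv ℝ g p v := by
  have hfg : ContDiff ℝ (⊤ : ℕ∞) (fun p => f p * g p) := hf.mul hg
  have hcfg : HasCompactSupport (fun p => f p * g p) := hcg.mul_left
  have key := integral_fderiv_zero _ hfg hcfg v
  have hd : ∀ p, fderiv ℝ (fun q => f q * g q) p v
      = fderiv ℝ f p v * g p + f p * fderiv ℝ g p v := by
    intro p
    rw [fderiv_fun_mul (hf.differentiable (by simp) p) (hg.differentiable (by simp) p)]
    simp only [ContinuousLinearMap.add_apply, ContinuousLinearMap.smul_apply, smul_eq_mul]; ring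
  have hcg' : HasCompactSupport (fun p => fderiv ℝ g p v) := by
    have h0 : (fun p => fderiv ℝ g p v) = (fun L : (Fin 2 → ℝ) →L[ℝ] ℝ => L v) ∘ fderiv ℝ g := rfl
    rw [h0]
    exact (hcg.fderiv ℝ).comp_left (by simp)
  have i1 : Integrable (fun p => fderiv ℝ f p v * g p) :=
    ((cont_fderiv_apply f hf v).mul (hg.continuous)).integrable_of_hasCompactSupport hcg.mul_left
  have i2 : Integrable (fun p => f p * fderiv ℝ g p v) :=
    ((hf.continuous).mul (cont_fderiv_apply g hg v)).integrable_of_hasCompactSupport hcg'.mul_left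
  have hsum : ∫ p, (fderiv ℝ f p v * g p + f p * fderiv ℝ g p v) = 0 := by
    rw [← key]; exact integral_congr_ae (Filter.Eventually.of_forall fun p => (hd p).symm)
  rw [integral_add i1 i2] at hsum
  linarith

lemma fderiv_comp_proj (v : (Fin 2 → ℝ) → (Fin 2 → ℝ)) (hv : ContDiff ℝ (⊤ : ℕ∞) v)
    (p : Fin 2 → ℝ) (i : Fin 2) (w : Fin 2 → ℝ) :
    fderiv ℝ (fun q => v q i) p w = fderiv ℝ v p w i := by
  have h := (hv.differentiable (by simp) p).hasFDerivAt
  have h2 : HasFDerivAt (fun q => v q i)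
      ((ContinuousLinearMap.proj (R := ℝ) (φ := fun _ : Fin 2 => ℝ) i).comp (fderiv ℝ v p)) p := by
    exact (ContinuousLinearMap.proj i).hasFDerivAt.comp p h
  rw [h2.fderiv]; rfl

lemma hasCompactSupport_eps_comp (ψ : (Fin 2 → ℝ) → (Fin 2 → ℝ)) (hψc : HasCompactSupport ψ)
    (F : Matrix (Fin 2) (Fin 2) ℝ → ℝ) (hF : F 0 = 0) :
    HasCompactSupport (fun p => F (epsl ψ p)) := by
  have h0 : (fun p => F (epsl ψ p)) =
      (fun L : (Fin 2 → ℝ) →L[ℝ] (Fin 2 → ℝ) =>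
        F ((1/2 : ℝ) • ((Matrix.of fun i j => L (Pi.single j 1) i) +
          (Matrix.of fun i j => L (Pi.single j 1) i)ᵀ))) ∘ fderiv ℝ ψ := rfl
  rw [h0]
  refine (hψc.fderiv ℝ).comp_left ?_
  show F ((1/2 : ℝ) • ((Matrix.of fun i j =>
      (0 : (Fin 2 → ℝ) →L[ℝ] (Fin 2 → ℝ)) (Pi.single j 1) i) +
    (Matrix.of fun i j => (0 : (Fin 2 → ℝ) →L[ℝ] (Fin 2 → ℝ)) (Pi.single j 1) i)ᵀ)) = 0
  have hm : (Matrix.of fun i j =>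
      (0 : (Fin 2 → ℝ) →L[ℝ] (Fin 2 → ℝ)) (Pi.single j 1) i) = (0 : Matrix (Fin 2) (Fin 2) ℝ) := by
    ext i j; simp
  rw [hm]
  simpa using hF

lemma cont_frobSq (N : (Fin 2 → ℝ) → Matrix (Fin 2) (Fin 2) ℝ)
    (hN : ∀ i j, Continuous fun p => N p i j) : Continuous fun p => frobSq (N p) := by
  have h1 : (fun p => frobSq (N p)) = fun p =>
      (N p 0 0)^2 + (N p 0 1)^2 + ((N p 1 0)^2 + (N p 1 1)^2) := by
    funext p; simp [frobSq, Fin.sum_univ_two]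
  rw [h1]
  exact (((hN 0 0).pow 2).add ((hN 0 1).pow 2)).add (((hN 1 0).pow 2).add ((hN 1 1).pow 2))

lemma cont_entries_CinvSqrt (μ lamt : ℝ) (M : (Fin 2 → ℝ) → Matrix (Fin 2) (Fin 2) ℝ)
    (hM : ∀ i j, Continuous fun p => M p i j) :
    ∀ i j, Continuous fun p => CinvSqrt μ lamt (M p) i j := by
  intro i j
  have h0 : (fun p => CinvSqrt μ lamt (M p) i j) = fun p =>
      (Real.sqrt (2*μ))⁻¹ * (M p i j - (M p 0 0 + M p 1 1)/2 * (if i = j then 1 else 0)) +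
      (Real.sqrt (2*(μ+lamt)))⁻¹ * ((M p 0 0 + M p 1 1)/2 * (if i = j then 1 else 0)) := by
    funext p
    simp only [CinvSqrt, Matrix.trace, Matrix.diag, Fin.sum_univ_two, Matrix.add_apply,
      Matrix.sub_apply, Matrix.smul_apply, Matrix.one_apply, smul_eq_mul]
  rw [h0]
  exact (continuous_const.mul ((hM i j).sub
      ((((hM 0 0).add (hM 1 1)).div_const 2).mul continuous_const))).add
    (continuous_const.mul ((((hM 0 0).add (hM 1 1)).div_const 2).mul continuous_const))

lemma cont_entries_Csq (μ lamt : ℝ) (M : (Fin 2 → ℝ) → Matrix (Fin 2) (Fin 2) ℝ)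
    (hM : ∀ i j, Continuous fun p => M p i j) :
    ∀ i j, Continuous fun p => Csq μ lamt (M p) i j := by
  intro i j
  have h0 : (fun p => Csq μ lamt (M p) i j) = fun p =>
      (Real.sqrt (2*μ)) * (M p i j - (M p 0 0 + M p 1 1)/2 * (if i = j then 1 else 0)) +
      (Real.sqrt (2*(μ+lamt))) * ((M p 0 0 + M p 1 1)/2 * (if i = j then 1 else 0)) := by
    funext p
    simp only [Csq, Matrix.trace, Matrix.diag, Fin.sum_univ_two, Matrix.add_apply,
      Matrix.sub_apply, Matrix.smul_apply, Matrix.one_apply, smul_eq_mul]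
  rw [h0]
  exact (continuous_const.mul ((hM i j).sub
      ((((hM 0 0).add (hM 1 1)).div_const 2).mul continuous_const))).add
    (continuous_const.mul ((((hM 0 0).add (hM 1 1)).div_const 2).mul continuous_const))

lemma cont_entries_Cel (μ lamt : ℝ) (M : (Fin 2 → ℝ) → Matrix (Fin 2) (Fin 2) ℝ)
    (hM : ∀ i j, Continuous fun p => M p i j) :
    ∀ i j, Continuous fun p => Cel μ lamt (M p) i j := by
  intro i j
  have h0 : (fun p => Cel μ lamt (M p) i j) = fun p =>
      2 * μ * M p i j + lamt * (M p 0 0 + M p 1 1) * (if i = j then 1 else 0) := by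
    funext p
    simp only [Cel, Matrix.trace, Matrix.diag, Fin.sum_univ_two, Matrix.add_apply,
      Matrix.smul_apply, Matrix.one_apply, smul_eq_mul]
  rw [h0]
  exact (continuous_const.mul (hM i j)).add
    ((continuous_const.mul ((hM 0 0).add (hM 1 1))).mul continuous_const)

/-- Lemma 4.4 of the paper, for smooth fields: whenever `div x* = −γ_h`,
`Res₂(ψ) ≤ ‖C^{-1/2}(x* − Cε(φ_h))‖ ‖ψ‖_C`. -/
theorem stmt14 (μ lamt : ℝ) (hμ : 0 < μ) (hlamt : 0 ≤ lamt)
    (xs : (Fin 2 → ℝ) → Matrix (Fin 2) (Fin 2) ℝ)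
    (hxs : ∀ i j, ContDiff ℝ (⊤ : ℕ∞) (fun p => xs p i j))
    (hxsym : ∀ p, (xs p)ᵀ = xs p)
    (φh : (Fin 2 → ℝ) → (Fin 2 → ℝ)) (hφh : ContDiff ℝ (⊤ : ℕ∞) φh)
    (γh : (Fin 2 → ℝ) → Fin 2 → ℝ) (hγh : ∀ p, γh p = -(divMat xs p))
    (hint : Integrable (fun p => frobSq (CinvSqrt μ lamt (xs p - Cel μ lamt (epsl φh p))))) :
    ∀ ψ : (Fin 2 → ℝ) → (Fin 2 → ℝ), ContDiff ℝ (⊤ : ℕ∞) ψ → HasCompactSupport ψ →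
      (-(∫ p, frobInner (Cel μ lamt (epsl φh p)) (epsl ψ p)) +
          ∫ p, ∑ i, γh p i * ψ p i) ≤
        Real.sqrt (∫ p, frobSq (CinvSqrt μ lamt (xs p - Cel μ lamt (epsl φh p)))) *
          Real.sqrt (∫ p, frobInner (Cel μ lamt (epsl ψ p)) (epsl ψ p)) := by
  intro ψ hψ hψc
  set Afn : (Fin 2 → ℝ) → Matrix (Fin 2) (Fin 2) ℝ :=
    fun p => xs p - Cel μ lamt (epsl φh p) with hAfn_def
  -- basic continuity / support facts
  have hψi : ∀ i, ContDiff ℝ (⊤ : ℕ∞) (fun q => ψ q i) := fun i => contDiff_pi.mp hψ i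
  have hψi_cs : ∀ i, HasCompactSupport (fun q => ψ q i) := fun i =>
    hψc.comp_left (g := fun y : Fin 2 → ℝ => y i) rfl
  have hjac_cont : ∀ (v : (Fin 2 → ℝ) → (Fin 2 → ℝ)), ContDiff ℝ (⊤ : ℕ∞) v →
      ∀ i j, Continuous (fun p => jac v p i j) := fun v hv i j =>
    (continuous_apply i).comp ((hv.continuous_fderiv (by simp)).clm_apply continuous_const)
  have heps_cont : ∀ (v : (Fin 2 → ℝ) → (Fin 2 → ℝ)), ContDiff ℝ (⊤ : ℕ∞) v →
      ∀ i j, Continuous fun p => epsl v p i j := by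
    intro v hv i j
    have h0 : (fun p => epsl v p i j) = fun p => (1/2 : ℝ) * (jac v p i j + jac v p j i) := rfl
    rw [h0]
    exact continuous_const.mul ((hjac_cont v hv i j).add (hjac_cont v hv j i))
  have hjac_cs : ∀ i j, HasCompactSupport fun p => jac ψ p i j := by
    intro i j
    have h0 : (fun p => jac ψ p i j) =
        (fun L : (Fin 2 → ℝ) →L[ℝ] (Fin 2 → ℝ) => L (Pi.single j 1) i) ∘ fderiv ℝ ψ := rfl
    rw [h0]
    exact (hψc.fderiv ℝ).comp_left (by simp)
  have heps_cs : ∀ i j, HasCompactSupport fun p => epsl ψ p i j := fun i j =>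
    hasCompactSupport_eps_comp ψ hψc (fun M => M i j) rfl
  have hxs_cont : ∀ i j, Continuous fun p => xs p i j := fun i j => (hxs i j).continuous
  have hepsφ_cont : ∀ i j, Continuous fun p => epsl φh p i j := heps_cont φh hφh
  have hepsψ_cont : ∀ i j, Continuous fun p => epsl ψ p i j := heps_cont ψ hψ
  have hAfn_cont : ∀ i j, Continuous fun p => Afn p i j := by
    intro i j
    have h0 : (fun p => Afn p i j) = fun p => xs p i j - Cel μ lamt (epsl φh p) i j := rfl
    rw [h0]
    exact (hxs_cont i j).sub (cont_entries_Cel μ lamt _ hepsφ_cont i j)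
  -- generic integrability of frobInner against epsl ψ
  have int_frob_eps : ∀ (M : (Fin 2 → ℝ) → Matrix (Fin 2) (Fin 2) ℝ),
      (∀ i j, Continuous fun p => M p i j) →
      Integrable (fun p => frobInner (M p) (epsl ψ p)) := by
    intro M hM
    have h0 : (fun p => frobInner (M p) (epsl ψ p)) =
        fun p => ∑ i, ∑ j, M p i j * epsl ψ p i j := rfl
    rw [h0]
    exact integrable_finset_sum _ fun i _ => integrable_finset_sum _ fun j _ =>
      ((hM i j).mul (hepsψ_cont i j)).integrable_of_hasCompactSupport (heps_cs i j).mul_left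
  -- step 1 : integration by parts for the γ term
  have int_d : ∀ i j, Integrable (fun p =>
      fderiv ℝ (fun q => xs q i j) p (Pi.single j 1) * ψ p i) := fun i j =>
    ((cont_fderiv_apply _ (hxs i j) _).mul ((hψi i).continuous)).integrable_of_hasCompactSupport
      (hψi_cs i).mul_left
  have int_x : ∀ i j, Integrable (fun p => xs p i j * jac ψ p i j) := fun i j =>
    ((hxs_cont i j).mul (hjac_cont ψ hψ i j)).integrable_of_hasCompactSupport
      (hjac_cs i j).mul_left
  have int_dn : ∀ i j, Integrable (fun p =>
      -(fderiv ℝ (fun q => xs q i j) p (Pi.single j 1) * ψ p i)) := fun i j => (int_d i j).neg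
  have hγ_eq : ∫ p, ∑ i, γh p i * ψ p i = ∫ p, frobInner (xs p) (epsl ψ p) := by
    have hpt : (fun p => ∑ i, γh p i * ψ p i) = fun p => ∑ i, ∑ j,
        -(fderiv ℝ (fun q => xs q i j) p (Pi.single j 1) * ψ p i) := by
      funext p
      rw [hγh p]
      simp only [divMat, Pi.neg_apply, Fin.sum_univ_two]
      ring
    rw [hpt]
    rw [integral_finset_sum _ (fun i _ => integrable_finset_sum _ (fun j _ => int_dn i j))]
    have hswap : ∀ i ∈ (Finset.univ : Finset (Fin 2)),
        (∫ p, ∑ j, -(fderiv ℝ (fun q => xs q i j) p (Pi.single j 1) * ψ p i)) =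
        ∑ j, ∫ p, xs p i j * jac ψ p i j := by
      intro i _
      rw [integral_finset_sum _ (fun j _ => int_dn i j)]
      refine Finset.sum_congr rfl fun j _ => ?_
      rw [integral_neg, byparts _ _ (hxs i j) (hψi i) (hψi_cs i) (Pi.single j 1), neg_neg]
      refine integral_congr_ae (Filter.Eventually.of_forall fun p => ?_)
      show xs p i j * fderiv ℝ (fun q => ψ q i) p (Pi.single j 1) = xs p i j * jac ψ p i j
      rw [fderiv_comp_proj ψ hψ p i (Pi.single j 1)]
      rfl
    rw [Finset.sum_congr rfl hswap]
    have hstep : (∑ i, ∑ j, ∫ p, xs p i j * jac ψ p i j)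
        = ∫ p, ∑ i, ∑ j, xs p i j * jac ψ p i j := by
      rw [integral_finset_sum _ (fun i _ => integrable_finset_sum _ (fun j _ => int_x i j))]
      exact Finset.sum_congr rfl fun i _ => (integral_finset_sum _ fun j _ => int_x i j).symm
    rw [hstep]
    have hsym : ∀ p, (∑ i, ∑ j, xs p i j * jac ψ p i j) = frobInner (xs p) (epsl ψ p) := by
      intro p
      have hs : xs p 1 0 = xs p 0 1 := congr_fun (congr_fun (hxsym p) 0) 1
      have heps : ∀ i j, epsl ψ p i j = (1/2 : ℝ) * (jac ψ p i j + jac ψ p j i) :=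
        fun i j => rfl
      simp only [frobInner, Fin.sum_univ_two, heps]
      linear_combination ((jac ψ p 1 0 - jac ψ p 0 1) / 2) * hs
    exact integral_congr_ae (Filter.Eventually.of_forall hsym)
  -- step 2 : combine into a single integral
  have int_X : Integrable (fun p => frobInner (xs p) (epsl ψ p)) := int_frob_eps _ hxs_cont
  have int_C : Integrable (fun p => frobInner (Cel μ lamt (epsl φh p)) (epsl ψ p)) :=
    int_frob_eps _ (cont_entries_Cel μ lamt _ hepsφ_cont)
  have hstep2 : (-(∫ p, frobInner (Cel μ lamt (epsl φh p)) (epsl ψ p)) +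
      ∫ p, ∑ i, γh p i * ψ p i) = ∫ p, frobInner (Afn p) (epsl ψ p) := by
    rw [hγ_eq, neg_add_eq_sub, ← integral_sub int_X int_C]
    refine integral_congr_ae (Filter.Eventually.of_forall fun p => ?_)
    have h0 : ∀ i j, Afn p i j = xs p i j - Cel μ lamt (epsl φh p) i j := fun i j => rfl
    simp only [frobInner, Fin.sum_univ_two, h0]
    ring
  rw [hstep2]
  -- step 3 : pointwise Cauchy–Schwarz and integral Cauchy–Schwarz
  set f : (Fin 2 → ℝ) → ℝ := fun p => Real.sqrt (frobSq (CinvSqrt μ lamt (Afn p))) with hf_def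
  set g : (Fin 2 → ℝ) → ℝ := fun p => Real.sqrt (frobSq (Csq μ lamt (epsl ψ p))) with hg_def
  have hf_cont : Continuous f :=
    Real.continuous_sqrt.comp (cont_frobSq _ (cont_entries_CinvSqrt μ lamt _ hAfn_cont))
  have hg_cont : Continuous g :=
    Real.continuous_sqrt.comp (cont_frobSq _ (cont_entries_Csq μ lamt _ hepsψ_cont))
  have hg_cs : HasCompactSupport g := by
    refine hasCompactSupport_eps_comp ψ hψc (fun M => Real.sqrt (frobSq (Csq μ lamt M))) ?_
    show Real.sqrt (frobSq (Csq μ lamt 0)) = 0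
    have h0 : Csq μ lamt 0 = 0 := by
      simp [Csq]
    rw [h0]
    have h1 : frobSq (0 : Matrix (Fin 2) (Fin 2) ℝ) = 0 := by simp [frobSq]
    rw [h1, Real.sqrt_zero]
  have int_A : Integrable (fun p => frobInner (CinvSqrt μ lamt (Afn p)) (Csq μ lamt (epsl ψ p))) := by
    have h0 : (fun p => frobInner (CinvSqrt μ lamt (Afn p)) (Csq μ lamt (epsl ψ p))) =
        fun p => frobInner (Afn p) (epsl ψ p) :=
      funext fun p => alg1 μ lamt hμ hlamt _ _
    rw [h0]
    exact int_frob_eps _ hAfn_cont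
  have int_fg : Integrable (fun p => f p * g p) :=
    (hf_cont.mul hg_cont).integrable_of_hasCompactSupport hg_cs.mul_left
  have hf2 : Integrable (fun p => f p ^ 2) := by
    have h0 : (fun p => f p ^ 2) = fun p => frobSq (CinvSqrt μ lamt (Afn p)) :=
      funext fun p => Real.sq_sqrt (frobSq_nonneg _)
    rw [h0]
    exact hint
  have hg2 : Integrable (fun p => g p ^ 2) := by
    have h0 : (fun p => g p ^ 2) = fun p => frobInner (Cel μ lamt (epsl ψ p)) (epsl ψ p) :=
      funext fun p => (Real.sq_sqrt (frobSq_nonneg _)).trans (alg2 μ lamt hμ hlamt _)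
    rw [h0]
    exact int_frob_eps _ (cont_entries_Cel μ lamt _ hepsψ_cont)
  have key : ∫ p, frobInner (Afn p) (epsl ψ p) ≤
      Real.sqrt (∫ p, f p ^ 2) * Real.sqrt (∫ p, g p ^ 2) := by
    have h1 : ∫ p, frobInner (Afn p) (epsl ψ p) =
        ∫ p, frobInner (CinvSqrt μ lamt (Afn p)) (Csq μ lamt (epsl ψ p)) :=
      integral_congr_ae (Filter.Eventually.of_forall fun p => (alg1 μ lamt hμ hlamt _ _).symm)
    rw [h1]
    calc ∫ p, frobInner (CinvSqrt μ lamt (Afn p)) (Csq μ lamt (epsl ψ p)) ≤ ∫ p, f p * g p := by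
          refine integral_mono int_A int_fg fun p => ?_
          exact cs_pointwise _ _
      _ ≤ Real.sqrt (∫ p, f p ^ 2) * Real.sqrt (∫ p, g p ^ 2) := int_cs f g hf2 hg2 int_fg
  refine key.trans (le_of_eq ?_)
  congr 1
  · congr 1
    refine integral_congr_ae (Filter.Eventually.of_forall fun p => ?_)
    exact Real.sq_sqrt (frobSq_nonneg _)
  · congr 1
    refine integral_congr_ae (Filter.Eventually.of_forall fun p => ?_)
    exact (Real.sq_sqrt (frobSq_nonneg _)).trans (alg2 μ lamt hμ hlamt _)
end
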